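/- As d → ∞, ∏_{i=1}^d L(2i+1) ∼ C·√d, i.e., lim_{d→∞} (∏_{i=1}^d L(2i+1))/√d = C, where C = 2^{1/6}·e^{1/2}·π/A⁶. -/

import Mathlib

open Filter Finset Real

namespace Dimer

/-- The kernel `L(d) = Γ((d-1)/2)² Γ((d+1)/2)² / Γ(d/2)⁴`. -/
noncomputable def Lker (d : ℝ) : ℝ :=
  Real.Gamma ((d - 1) / 2) ^ 2 * Real.Gamma ((d + 1) / 2) ^ 2 / Real.Gamma (d / 2) ^ 4

/-- The kernel `U(d) = Γ((d-1)/2)² Γ((d+1)/2)² / (Γ(d/2-1) Γ(d/2)² Γ(d/2+1))`. -/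
noncomputable def Uker (d : ℝ) : ℝ :=
  Real.Gamma ((d - 1) / 2) ^ 2 * Real.Gamma ((d + 1) / 2) ^ 2 /
    (Real.Gamma (d / 2 - 1) * Real.Gamma (d / 2) ^ 2 * Real.Gamma (d / 2 + 1))

/-- The Pochhammer symbol `(a)_n = a(a+1)⋯(a+n-1)`. -/
noncomputable def poch (a : ℝ) (n : ℕ) : ℝ := ∏ j ∈ Finset.range n, (a + (j : ℝ))

/-- `A` is the Glaisher–Kinkelin constant:
`lim_{n→∞} (0!·1!⋯(n-1)!) · n^{-n²/2+1/12} · (2π)^{-n/2} · e^{3n²/4} = e^{1/12}/A`. -/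
def IsGlaisher (A : ℝ) : Prop :=
  Filter.Tendsto (fun n : ℕ =>
      (∏ i ∈ Finset.range n, (Nat.factorial i : ℝ)) *
        (n : ℝ) ^ (-(n : ℝ) ^ 2 / 2 + 1 / 12) * (2 * Real.pi) ^ (-(n : ℝ) / 2) *
        Real.exp (3 * (n : ℝ) ^ 2 / 4))
    Filter.atTop (nhds (Real.exp (1 / 12) / A))

end Dimer

/-! Legendre's duplication formula turns each factor into factorials,
`L(2i+1) = i² (i-1)!⁸ 2^(8i-4) / (π² (2i-1)!⁴)`, so with `F(n) = ∏_{i<n} i!` the product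
telescopes to `F(d)⁸ d!⁴ 2^(4d²+2d) / (π^(2d) F(2d+1)²)`. Normalising `F` at `d` and at `2d+1` by
the Glaisher sequence and `d!` by Stirling's sequence, what is left of `∏ L(2i+1) / √d` is
`2^(1/6) / π · exp R(2d)` with `R(m) → 0`, so the limit is `c⁸ π² / c² · 2^(1/6) / π` where
`c = e^(1/12) / A`. This needs `c ≠ 0`, which holds because the Glaisher sequence stays above
`e^(-1/4)`: Stirling's lower bound for `n!` and a sharp upper bound for `∑ k log k` cancel all
growing terms of its logarithm. -/

open Topology
open scoped Nat

namespace Dimer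

noncomputable def factorialProd (n : ℕ) : ℝ := ∏ i ∈ range n, (i ! : ℝ)

lemma factorialProd_pos (n : ℕ) : 0 < factorialProd n :=
  prod_pos fun i _ => by positivity

lemma factorialProd_succ (n : ℕ) : factorialProd (n + 1) = factorialProd n * n ! :=
  prod_range_succ _ _

lemma sqrt_pi_pow_four : √π ^ 4 = π ^ 2 := by
  rw [show 4 = 2 * 2 by rfl, pow_mul, sq_sqrt pi_pos.le]

lemma Gamma_nat_add_three_halves (k : ℕ) :
    Gamma (k + 3 / 2) = (2 * k + 1)! * √π / (2 ^ (2 * k + 1) * k !) := by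
  have hdup := Gamma_mul_Gamma_add_half (k + 1)
  rw [show (2 : ℝ) * (k + 1) = (2 * k + 1 : ℕ) + 1 by push_cast; ring, Gamma_nat_eq_factorial,
    show (1 : ℝ) - ((2 * k + 1 : ℕ) + 1) = -(2 * k + 1 : ℕ) by push_cast; ring,
    rpow_neg zero_le_two, rpow_natCast, add_assoc, show (1 : ℝ) + 1 / 2 = 3 / 2 by norm_num,
    Gamma_nat_eq_factorial] at hdup
  rw [eq_div_iff (by positivity)]
  calc Gamma (k + 3 / 2) * (2 ^ (2 * k + 1) * k !)
        = 2 ^ (2 * k + 1) * (k ! * Gamma (k + 3 / 2)) := by ring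
    _ = (2 * k + 1)! * √π := by rw [hdup]; field_simp

lemma Lker_two_mul_succ_add_one (k : ℕ) :
    Lker (2 * (k + 1) + 1) =
      (k + 1) ^ 2 * (k ! : ℝ) ^ 8 * 2 ^ (8 * k + 4) / (π ^ 2 * ((2 * k + 1)! : ℝ) ^ 4) := by
  rw [Lker, show (2 * ((k : ℝ) + 1) + 1 - 1) / 2 = k + 1 by ring,
    show (2 * ((k : ℝ) + 1) + 1 + 1) / 2 = (k + 1 : ℕ) + 1 by push_cast; ring,
    show (2 * ((k : ℝ) + 1) + 1) / 2 = k + 3 / 2 by ring, Gamma_nat_eq_factorial,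
    Gamma_nat_eq_factorial, Gamma_nat_add_three_halves, Nat.factorial_succ]
  push_cast
  field_simp
  rw [sqrt_pi_pow_four]
  ring

lemma prod_Lker (d : ℕ) :
    ∏ i ∈ Icc 1 d, Lker (2 * (i : ℝ) + 1) =
      factorialProd d ^ 8 * (d ! : ℝ) ^ 4 * 2 ^ (4 * d ^ 2 + 2 * d) /
        (π ^ (2 * d) * factorialProd (2 * d + 1) ^ 2) := by
  induction d with
  | zero => simp [factorialProd]
  | succ k ih =>
    rw [prod_Icc_succ_top (by omega), ih, Nat.cast_succ, Lker_two_mul_succ_add_one,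
      show 2 * (k + 1) + 1 = 2 * k + 1 + 1 + 1 by ring, factorialProd_succ k,
      factorialProd_succ (2 * k + 1 + 1), factorialProd_succ (2 * k + 1),
      Nat.factorial_succ (2 * k + 1), Nat.factorial_succ k]
    have := factorialProd_pos (2 * k + 1)
    push_cast
    field_simp
    ring

noncomputable def glaisherSeq (n : ℕ) : ℝ :=
  factorialProd n * (n : ℝ) ^ (-(n : ℝ) ^ 2 / 2 + 1 / 12) * (2 * π) ^ (-(n : ℝ) / 2) *
    exp (3 * (n : ℝ) ^ 2 / 4)

lemma isGlaisher_iff {A : ℝ} :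
    IsGlaisher A ↔ Tendsto glaisherSeq atTop (𝓝 (exp (1 / 12) / A)) :=
  Iff.rfl

lemma glaisherSeq_pos {n : ℕ} (hn : n ≠ 0) : 0 < glaisherSeq n := by
  have := factorialProd_pos n
  unfold glaisherSeq
  positivity

lemma log_glaisherSeq {n : ℕ} (hn : n ≠ 0) :
    log (glaisherSeq n) = log (factorialProd n) - ((n : ℝ) ^ 2 / 2 - 1 / 12) * log n -
      n / 2 * log (2 * π) + 3 * (n : ℝ) ^ 2 / 4 := by
  have := factorialProd_pos n
  have hn' : (0 : ℝ) < n := by positivity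
  rw [glaisherSeq, log_mul (by positivity) (by positivity), log_mul (by positivity) (by positivity),
    log_mul (by positivity) (by positivity), log_rpow hn', log_rpow (by positivity), log_exp]
  ring

lemma log_factorialProd (n : ℕ) :
    log (factorialProd n) = n * log n ! - ∑ k ∈ range (n + 1), k * log k := by
  induction n with
  | zero => simp [factorialProd]
  | succ n ih =>
    rw [factorialProd_succ, log_mul (factorialProd_pos n).ne' (by positivity), ih,
      sum_range_succ _ (n + 1), Nat.factorial_succ, Nat.cast_mul,
      log_mul (by positivity) (by positivity)]
    push_cast
    ring

-- Three terms of the series of `log (1 + a⁻¹)` in powers of `1 / (2a + 1)` already suffice.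
lemma two_mul_add_one_div_four_le {a : ℝ} (ha : 0 < a) :
    (2 * a + 1) / 4 ≤ (a * (a + 1) / 2 + 1 / 12) * log (1 + a⁻¹) := by
  have hsum := sum_le_hasSum (range 3) (fun k _ => by positivity) (hasSum_log_one_add_inv ha)
  simp only [sum_range_succ, sum_range_zero] at hsum
  set y := 1 / (2 * a + 1) with hy
  have hy0 : 0 < y := by positivity
  have hy1 : y ≤ 1 := by rw [hy, div_le_one (by positivity)]; linarith
  have ha_eq : a = (1 / y - 1) / 2 := by rw [hy]; field_simp; ring
  calc (2 * a + 1) / 4 ≤ (a * (a + 1) / 2 + 1 / 12) * (2 * y + 2 / 3 * y ^ 3 + 2 / 5 * y ^ 5) := by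
        rw [ha_eq]
        field_simp
        nlinarith [pow_pos hy0 4, pow_pos hy0 6, mul_le_mul_of_nonneg_left hy1 (pow_pos hy0 6).le]
    _ ≤ _ := by
        gcongr
        norm_num at hsum ⊢
        linarith

lemma sum_mul_log_le {n : ℕ} (hn : n ≠ 0) :
    ∑ k ∈ range (n + 1), (k : ℝ) * log k ≤
      ((n : ℝ) ^ 2 / 2 + n / 2 + 1 / 12) * log n - (n : ℝ) ^ 2 / 4 + 1 / 4 := by
  induction n, Nat.one_le_iff_ne_zero.mpr hn using Nat.le_induction with
  | base => simp [sum_range_succ]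
  | succ n hn ih =>
    have hn' : (0 : ℝ) < n := by positivity
    have hstep := two_mul_add_one_div_four_le hn'
    rw [show 1 + (n : ℝ)⁻¹ = (n + 1) / n by field_simp, log_div (by positivity) hn'.ne'] at hstep
    rw [sum_range_succ]
    push_cast
    nlinarith [ih (by omega)]

lemma neg_one_div_four_le_log_glaisherSeq {n : ℕ} (hn : n ≠ 0) :
    -1 / 4 ≤ log (glaisherSeq n) := by
  have hstirling := Stirling.le_log_factorial_stirling hn
  have hsum := sum_mul_log_le hn
  rw [log_glaisherSeq hn, log_factorialProd]
  have hn' : (0 : ℝ) ≤ n := by positivity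
  nlinarith [mul_le_mul_of_nonneg_left hstirling hn']

lemma exp_neg_one_div_four_le_of_isGlaisher {A : ℝ} (hA : IsGlaisher A) :
    exp (-1 / 4) ≤ exp (1 / 12) / A :=
  ge_of_tendsto (isGlaisher_iff.1 hA) <| eventually_atTop.2 ⟨1, fun n hn => by
    rw [← exp_log (glaisherSeq_pos (by omega : n ≠ 0))]
    exact exp_le_exp.2 (neg_one_div_four_le_log_glaisherSeq (by omega))⟩

lemma abs_log_one_add_sub_le {t : ℝ} (ht0 : 0 ≤ t) (ht1 : t ≤ 1 / 2) :
    |log (1 + t) - (t - t ^ 2 / 2)| ≤ 2 * t ^ 3 := by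
  have h := abs_log_sub_add_sum_range_le (x := -t) (by rw [abs_neg, abs_of_nonneg ht0]; linarith) 2
  simp only [sum_range_succ, sum_range_zero, abs_neg, abs_of_nonneg ht0, sub_neg_eq_add] at h
  calc |log (1 + t) - (t - t ^ 2 / 2)| = |0 + -t / (0 + 1) + (-t) ^ 2 / (1 + 1) + log (1 + t)| := by
        congr 1; ring
    _ ≤ t ^ 3 / (1 - t) := by simpa using h
    _ ≤ 2 * t ^ 3 := by
        rw [div_le_iff₀ (by linarith)]
        nlinarith [pow_nonneg ht0 3]

/-- The exponent left over when `∏ L(2i+1) / √d` is matched against `glaisherSeq` and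
`stirlingSeq`, evaluated at `m = 2d`. -/
noncomputable def logRemainder (m : ℝ) : ℝ :=
  m + 3 / 2 - (m ^ 2 + 2 * m + 5 / 6) * log (1 + m⁻¹)

lemma abs_logRemainder_le {m : ℝ} (hm : 2 ≤ m) : |logRemainder m| ≤ 5 / m := by
  set t := m⁻¹ with ht
  have ht0 : 0 < t := by positivity
  have ht1 : t ≤ 1 / 2 := by rw [ht, one_div]; exact inv_anti₀ two_pos hm
  have hm' : m = 1 / t := by rw [ht, one_div, inv_inv]
  have hρ := abs_le.1 (abs_log_one_add_sub_le ht0.le ht1)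
  have hK : 0 ≤ 1 / t ^ 2 + 2 / t + 5 / 6 := by positivity
  have hid : logRemainder m = t / 6 + 5 * t ^ 2 / 12 -
      (1 / t ^ 2 + 2 / t + 5 / 6) * (log (1 + t) - (t - t ^ 2 / 2)) := by
    rw [logRemainder, ← ht, hm']
    field_simp
    ring
  have hbound : (1 / t ^ 2 + 2 / t + 5 / 6) * (2 * t ^ 3) = 2 * t + 4 * t ^ 2 + 5 / 3 * t ^ 3 := by
    field_simp
    ring
  rw [hid, hm', div_div_eq_mul_div, div_one, abs_le]
  constructor <;> nlinarith [mul_le_mul_of_nonneg_left hρ.2 hK, mul_le_mul_of_nonneg_left hρ.1 hK]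

lemma tendsto_logRemainder : Tendsto logRemainder atTop (𝓝 0) :=
  squeeze_zero_norm' (eventually_atTop.2 ⟨2, fun _ hm => abs_logRemainder_le hm⟩)
    (tendsto_const_nhds.div_atTop tendsto_id)

lemma log_prod_Lker (d : ℕ) :
    log (∏ i ∈ Icc 1 d, Lker (2 * (i : ℝ) + 1)) =
      8 * log (factorialProd d) + 4 * log d ! + (4 * d ^ 2 + 2 * d : ℕ) * log 2 -
        (2 * d : ℕ) * log π - 2 * log (factorialProd (2 * d + 1)) := by
  have := factorialProd_pos d
  have := factorialProd_pos (2 * d + 1)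
  rw [prod_Lker, log_div (by positivity) (by positivity), log_mul (by positivity) (by positivity),
    log_mul (by positivity) (by positivity), log_mul (by positivity) (by positivity)]
  simp only [log_pow]
  ring

lemma prod_Lker_div_sqrt {d : ℕ} (hd : d ≠ 0) :
    (∏ i ∈ Icc 1 d, Lker (2 * (i : ℝ) + 1)) / √d =
      glaisherSeq d ^ 8 * Stirling.stirlingSeq d ^ 4 / glaisherSeq (2 * d + 1) ^ 2 *
        (2 ^ (1 / 6 : ℝ) / π * exp (logRemainder (2 * d))) := by
  have hF := factorialProd_pos d
  have hF' := factorialProd_pos (2 * d + 1)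
  have hg := glaisherSeq_pos hd
  have hg' := glaisherSeq_pos (by omega : 2 * d + 1 ≠ 0)
  have hs : 0 < Stirling.stirlingSeq d := by
    obtain ⟨k, rfl⟩ := Nat.exists_eq_succ_of_ne_zero hd
    exact Stirling.stirlingSeq'_pos k
  have hd' : (0 : ℝ) < d := by positivity
  refine log_injOn_pos (Set.mem_Ioi.2 ?_) (Set.mem_Ioi.2 (by positivity)) ?_
  · rw [prod_Lker]; positivity
  rw [log_div (by rw [prod_Lker]; positivity) (by positivity), log_prod_Lker, log_sqrt hd'.le,
    log_mul (by positivity) (by positivity), log_div (by positivity) (by positivity),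
    log_mul (by positivity) (by positivity), log_mul (by positivity) (by positivity),
    log_div (by positivity) (by positivity), log_exp, log_rpow two_pos]
  simp only [log_pow]
  rw [log_glaisherSeq hd, log_glaisherSeq (by omega : 2 * d + 1 ≠ 0),
    Stirling.log_stirlingSeq_formula, logRemainder,
    show 1 + (2 * (d : ℝ))⁻¹ = (2 * d + 1) / (2 * d) by field_simp,
    log_div hd'.ne' (exp_pos 1).ne', log_div (by positivity) (by positivity), log_exp,
    log_mul two_ne_zero pi_ne_zero, log_mul two_ne_zero hd'.ne']
  push_cast
  ring

end Dimer

open Dimer Filter Finset Real in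
/-- Proposition 7.1, eq. (7.1): `∏_{i=1}^d L(2i+1) ∼ C√d` as
`d → ∞`, with `C = 2^{1/6} e^{1/2} π / A⁶`. -/
theorem statement_14 (A : ℝ) (hA : IsGlaisher A) :
    Filter.Tendsto
      (fun d : ℕ => (∏ i ∈ Finset.Icc 1 d, Lker (2 * (i : ℝ) + 1)) / Real.sqrt d)
      Filter.atTop
      (nhds ((2 : ℝ) ^ ((1 : ℝ) / 6) * Real.exp (1 / 2) * Real.pi / A ^ 6)) := by
  have hc : 0 < exp (1 / 12) / A :=
    (exp_pos _).trans_le (exp_neg_one_div_four_le_of_isGlaisher hA)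
  have hg := isGlaisher_iff.1 hA
  have hg' : Tendsto (fun d : ℕ => glaisherSeq (2 * d + 1)) atTop (𝓝 (exp (1 / 12) / A)) :=
    hg.comp (tendsto_atTop_mono (fun d => by simp only [id]; omega) tendsto_id)
  have hR : Tendsto (fun d : ℕ => exp (logRemainder (2 * d))) atTop (𝓝 1) := by
    simpa [Function.comp_def] using (continuous_exp.tendsto 0).comp <|
      tendsto_logRemainder.comp (tendsto_natCast_atTop_atTop.const_mul_atTop two_pos)
  have hlim := (((hg.pow 8).mul (Stirling.tendsto_stirlingSeq_sqrt_pi.pow 4)).div (hg'.pow 2)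
    (by positivity)).mul (hR.const_mul (2 ^ (1 / 6 : ℝ) / π))
  have hvalue : (exp (1 / 12) / A) ^ 8 * √π ^ 4 / (exp (1 / 12) / A) ^ 2 *
      (2 ^ (1 / 6 : ℝ) / π * 1) = 2 ^ (1 / 6 : ℝ) * exp (1 / 2) * π / A ^ 6 := by
    have hA0 : A ≠ 0 := by rintro rfl; simp at hc
    rw [sqrt_pi_pow_four,
      show exp (1 / 2) = exp (1 / 12) ^ 6 by rw [← exp_nat_mul]; norm_num]
    field_simp
  rw [← hvalue]
  refine hlim.congr' (eventually_atTop.2 ⟨1, fun d hd => ?_⟩)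
  exact (prod_Lker_div_sqrt (by omega)).symm
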